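/- Existence Lemma, modal clauses: let X ⊆ {D,T,4}, L = LIK X, and let Γ be a prime theory. (1) If □B ∉ Γ, then there exists a prime theory Δ such that R_L Γ Δ and B ∉ Δ. (2) If ◇B ∈ Γ, then there exists a prime theory Δ such that R_L Γ Δ and B ∈ Δ. -/
import Mathlib


/-- Formulas of intuitionistic modal logic. -/
inductive Formula : Type where
  | atom : ℕ → Formula
  | top  : Formula
  | bot  : Formula
  | and  : Formula → Formula → Formula
  | or   : Formula → Formula → Formula
  | imp  : Formula → Formula → Formula
  | box  : Formula → Formula
  | dia  : Formula → Formula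
deriving DecidableEq


/-- The three optional extension axioms D, T, 4. -/
inductive ModAx : Type where
  | D : ModAx
  | T : ModAx
  | Four : ModAx
deriving DecidableEq

/-- The Hilbert system LIK X: a complete Hilbert base for intuitionistic
propositional logic (as axiom schemata, hence all substitution instances of
IPL theorems are derivable), the modal axioms K□, K◇, N, DP, RV, the
extension axioms D, T, 4 according to membership in `X`, with rules
modus ponens and necessitation. -/
inductive LIK (X : Set ModAx) : Formula → Prop where
  | a1 (A B : Formula) : LIK X (A.imp (B.imp A))
  | a2 (A B C : Formula) : LIK X ((A.imp (B.imp C)).imp ((A.imp B).imp (A.imp C)))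
  | a3 (A B : Formula) : LIK X ((A.and B).imp A)
  | a4 (A B : Formula) : LIK X ((A.and B).imp B)
  | a5 (A B : Formula) : LIK X (A.imp (B.imp (A.and B)))
  | a6 (A B : Formula) : LIK X (A.imp (A.or B))
  | a7 (A B : Formula) : LIK X (B.imp (A.or B))
  | a8 (A B C : Formula) : LIK X ((A.imp C).imp ((B.imp C).imp ((A.or B).imp C)))
  | exfalso (A : Formula) : LIK X (Formula.bot.imp A)
  | truth : LIK X Formula.top
  | kbox (A B : Formula) :
      LIK X ((Formula.box (A.imp B)).imp ((Formula.box A).imp (Formula.box B)))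
  | kdia (A B : Formula) :
      LIK X ((Formula.box (A.imp B)).imp ((Formula.dia A).imp (Formula.dia B)))
  | nax : LIK X ((Formula.dia Formula.bot).imp Formula.bot)
  | dp (A B : Formula) :
      LIK X ((Formula.dia (A.or B)).imp ((Formula.dia A).or (Formula.dia B)))
  | rv (A B : Formula) :
      LIK X ((Formula.box (A.or B)).imp ((Formula.dia A).or (Formula.box B)))
  | dax : ModAx.D ∈ X → LIK X (Formula.dia Formula.top)
  | tax (A : Formula) : ModAx.T ∈ X →
      LIK X (((Formula.box A).imp A).and (A.imp (Formula.dia A)))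
  | fourax (A : Formula) : ModAx.Four ∈ X →
      LIK X (((Formula.box A).imp (Formula.box (Formula.box A))).and
        ((Formula.dia (Formula.dia A)).imp (Formula.dia A)))
  | mp (A B : Formula) : LIK X (A.imp B) → LIK X A → LIK X B
  | nec (A : Formula) : LIK X A → LIK X (Formula.box A)

/-- A theory for L = LIK X: contains all L-derivable formulas and is closed
under modus ponens. -/
def IsTheory (X : Set ModAx) (Γ : Set Formula) : Prop :=
  (∀ A, LIK X A → A ∈ Γ) ∧ ∀ A B, Formula.imp A B ∈ Γ → A ∈ Γ → B ∈ Γ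

/-- A prime theory: a proper theory (⊥ ∉ Γ) deciding disjunctions. -/
def IsPrime (X : Set ModAx) (Γ : Set Formula) : Prop :=
  IsTheory X Γ ∧ Formula.bot ∉ Γ ∧ ∀ A B, Formula.or A B ∈ Γ → A ∈ Γ ∨ B ∈ Γ

/-- The canonical accessibility relation:
`R_L Γ Δ` iff `□Γ ⊆ Δ` and `◇Δ ⊆ Γ`. -/
def CanR (Γ Δ : Set Formula) : Prop :=
  (∀ A, Formula.box A ∈ Γ → A ∈ Δ) ∧ (∀ A, A ∈ Δ → Formula.dia A ∈ Γ)


namespace ExistenceAux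

variable {X : Set ModAx}

/-- Derivability from a set of hypotheses. -/
inductive Der (X : Set ModAx) (S : Set Formula) : Formula → Prop
  | hyp {A : Formula} : A ∈ S → Der X S A
  | thm {A : Formula} : LIK X A → Der X S A
  | mp {A B : Formula} : Der X S (A.imp B) → Der X S A → Der X S B

lemma lik_id (A : Formula) : LIK X (A.imp A) :=
  LIK.mp _ _ (LIK.mp _ _ (LIK.a2 A (A.imp A) A) (LIK.a1 A (A.imp A))) (LIK.a1 A A)

lemma lik_comp {A B C : Formula} (h1 : LIK X (A.imp B)) (h2 : LIK X (B.imp C)) :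
    LIK X (A.imp C) :=
  LIK.mp _ _ (LIK.mp _ _ (LIK.a2 A B C) (LIK.mp _ _ (LIK.a1 (B.imp C) A) h2)) h1

lemma der_mono {S T : Set Formula} (hST : S ⊆ T) {A : Formula} (h : Der X S A) :
    Der X T A := by
  induction h with
  | hyp h => exact Der.hyp (hST h)
  | thm h => exact Der.thm h
  | mp _ _ ih1 ih2 => exact Der.mp ih1 ih2

/-- Deduction theorem. -/
lemma der_ded {S : Set Formula} {A C : Formula} (h : Der X (insert A S) C) :
    Der X S (A.imp C) := by
  induction h with
  | @hyp C h =>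
    rcases Set.mem_insert_iff.mp h with h | h
    · subst h; exact Der.thm (lik_id _)
    · exact Der.mp (Der.thm (LIK.a1 C A)) (Der.hyp h)
  | @thm C h => exact Der.mp (Der.thm (LIK.a1 C A)) (Der.thm h)
  | @mp P Q _ _ ih1 ih2 =>
    exact Der.mp (Der.mp (Der.thm (LIK.a2 A P Q)) ih1) ih2

lemma der_idem {S : Set Formula} {A : Formula}
    (h : Der X {C | Der X S C} A) : Der X S A := by
  induction h with
  | hyp h => exact h
  | thm h => exact Der.thm h
  | mp _ _ ih1 ih2 => exact Der.mp ih1 ih2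

lemma der_sUnion {c : Set (Set Formula)} (hc : IsChain (· ⊆ ·) c)
    (hne : c.Nonempty) {A : Formula} (h : Der X (⋃₀ c) A) :
    ∃ S ∈ c, Der X S A := by
  induction h with
  | hyp h =>
    obtain ⟨S, hS, hA⟩ := h
    exact ⟨S, hS, Der.hyp hA⟩
  | thm h => exact ⟨hne.choose, hne.choose_spec, Der.thm h⟩
  | mp _ _ ih1 ih2 =>
    obtain ⟨S1, hS1, h1⟩ := ih1
    obtain ⟨S2, hS2, h2⟩ := ih2
    rcases hc.total hS1 hS2 with h | h
    · exact ⟨S2, hS2, Der.mp (der_mono h h1) h2⟩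
    · exact ⟨S1, hS1, Der.mp h1 (der_mono h h2)⟩

lemma dia_bot_not_mem {Γ : Set Formula} (hΓ : IsPrime X Γ) :
    Formula.dia Formula.bot ∉ Γ := fun h =>
  hΓ.2.1 (hΓ.1.2 _ _ (hΓ.1.1 _ LIK.nax) h)

/-- Main extension lemma. -/
lemma extend (Γ : Set Formula) (hΓ : IsPrime X Γ) (F : Formula) (Δ₀ : Set Formula)
    (h0 : ∀ E, Der X Δ₀ (E.or F) → Formula.dia E ∈ Γ) :
    ∃ Δ : Set Formula, IsPrime X Δ ∧ Δ₀ ⊆ Δ ∧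
      (∀ A, A ∈ Δ → Formula.dia A ∈ Γ) ∧ F ∉ Δ := by
  set T : Set (Set Formula) :=
    {Δ | Δ₀ ⊆ Δ ∧ ∀ E, Der X Δ (E.or F) → Formula.dia E ∈ Γ} with hT
  have hΔ₀ : Δ₀ ∈ T := ⟨le_refl _, h0⟩
  obtain ⟨m, hm0, hmax⟩ := zorn_subset_nonempty T (fun c hcT hc hne => by
      refine ⟨⋃₀ c, ⟨?_, ?_⟩, fun s hs => Set.subset_sUnion_of_mem hs⟩
      · exact le_trans (hcT hne.choose_spec).1 (Set.subset_sUnion_of_mem hne.choose_spec)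
      · intro E hE
        obtain ⟨S, hS, hd⟩ := der_sUnion hc hne hE
        exact (hcT hS).2 E hd) Δ₀ hΔ₀
  have hmT : m ∈ T := hmax.prop
  -- m is deductively closed
  have hclosed : ∀ C, Der X m C → C ∈ m := by
    intro C hC
    have hTh : {C | Der X m C} ∈ T :=
      ⟨fun A hA => Der.hyp (hmT.1 hA), fun E hE => hmT.2 E (der_idem hE)⟩
    exact hmax.eq_of_subset hTh (fun A hA => Der.hyp hA) ▸ hC
  have hinv : ∀ E, Der X m (E.or F) → Formula.dia E ∈ Γ := hmT.2
  have hFnot : F ∉ m := by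
    intro hF
    have : Formula.dia Formula.bot ∈ Γ :=
      hinv _ (Der.mp (Der.thm (LIK.a7 Formula.bot F)) (Der.hyp hF))
    exact dia_bot_not_mem hΓ this
  refine ⟨m, ⟨⟨fun A hA => hclosed A (Der.thm hA),
      fun A B hAB hA => hclosed B (Der.mp (Der.hyp hAB) (Der.hyp hA))⟩, ?_, ?_⟩,
    hmT.1, fun A hA => hinv A (Der.mp (Der.thm (LIK.a6 A F)) (Der.hyp hA)), hFnot⟩
  · intro hbot
    exact dia_bot_not_mem hΓ
      (hinv _ (Der.mp (Der.thm (LIK.a6 Formula.bot F)) (Der.hyp hbot)))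
  · intro A A' hor
    by_contra hcon
    push_neg at hcon
    obtain ⟨hA, hA'⟩ := hcon
    have hfail : ∀ P : Formula, P ∉ m →
        ∃ E, Der X (insert P m) (E.or F) ∧ Formula.dia E ∉ Γ := by
      intro P hP
      by_contra hgood
      push_neg at hgood
      have : insert P m ∈ T :=
        ⟨le_trans hmT.1 (Set.subset_insert P m),
         fun E hE => hgood E hE⟩
      exact hP (hmax.eq_of_subset this (Set.subset_insert P m) ▸
        Set.mem_insert P m)
    obtain ⟨E, hEd, hEΓ⟩ := hfail A hA
    obtain ⟨E', hE'd, hE'Γ⟩ := hfail A' hA'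
    have d1 : Der X m (A.imp (E.or F)) := der_ded hEd
    have d2 : Der X m (A'.imp (E'.or F)) := der_ded hE'd
    -- (E∨F) ⊃ ((E∨E')∨F) and (E'∨F) ⊃ ((E∨E')∨F)
    have l1 : LIK X ((E.or F).imp ((E.or E').or F)) :=
      LIK.mp _ _ (LIK.mp _ _ (LIK.a8 E F ((E.or E').or F))
        (lik_comp (LIK.a6 E E') (LIK.a6 (E.or E') F)))
        (LIK.a7 (E.or E') F)
    have l2 : LIK X ((E'.or F).imp ((E.or E').or F)) :=
      LIK.mp _ _ (LIK.mp _ _ (LIK.a8 E' F ((E.or E').or F))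
        (lik_comp (LIK.a7 E E') (LIK.a6 (E.or E') F)))
        (LIK.a7 (E.or E') F)
    have c1 : Der X m (A.imp ((E.or E').or F)) :=
      Der.mp (Der.mp (Der.thm (LIK.a2 A (E.or F) ((E.or E').or F)))
        (Der.mp (Der.thm (LIK.a1 ((E.or F).imp ((E.or E').or F)) A)) (Der.thm l1))) d1
    have c2 : Der X m (A'.imp ((E.or E').or F)) :=
      Der.mp (Der.mp (Der.thm (LIK.a2 A' (E'.or F) ((E.or E').or F)))
        (Der.mp (Der.thm (LIK.a1 ((E'.or F).imp ((E.or E').or F)) A')) (Der.thm l2))) d2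
    have dEE' : Formula.dia (E.or E') ∈ Γ := by
      apply hinv
      exact Der.mp (Der.mp (Der.mp
        (Der.thm (LIK.a8 A A' ((E.or E').or F))) c1) c2) (Der.hyp hor)
    have : (Formula.dia E).or (Formula.dia E') ∈ Γ :=
      hΓ.1.2 _ _ (hΓ.1.1 _ (LIK.dp E E')) dEE'
    rcases hΓ.2.2 _ _ this with h | h
    · exact hEΓ h
    · exact hE'Γ h

/-- Boxed derivability: everything derivable from Γ□ is boxed in Γ. -/
lemma der_boxed {Γ : Set Formula} (hΓ : IsTheory X Γ) {C : Formula}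
    (h : Der X {A | Formula.box A ∈ Γ} C) : Formula.box C ∈ Γ := by
  induction h with
  | hyp h => exact h
  | thm h => exact hΓ.1 _ (LIK.nec _ h)
  | @mp A B _ _ ih1 ih2 =>
    exact hΓ.2 _ _ (hΓ.2 _ _ (hΓ.1 _ (LIK.kbox A B)) ih1) ih2

end ExistenceAux

open ExistenceAux in
/-- Existence Lemma, modal clauses. -/
theorem existence_modal (X : Set ModAx) (Γ : Set Formula) (hΓ : IsPrime X Γ)
    (B : Formula) :
    (Formula.box B ∉ Γ →
      ∃ Δ : Set Formula, IsPrime X Δ ∧ CanR Γ Δ ∧ B ∉ Δ) ∧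
    (Formula.dia B ∈ Γ →
      ∃ Δ : Set Formula, IsPrime X Δ ∧ CanR Γ Δ ∧ B ∈ Δ) := by
  obtain ⟨hth, hbot, hprime⟩ := hΓ
  constructor
  · intro hB
    obtain ⟨Δ, hΔprime, hsub, hdia, hF⟩ := extend Γ ⟨hth, hbot, hprime⟩ B
      {A | Formula.box A ∈ Γ} (by
        intro E hE
        have hbx : Formula.box (E.or B) ∈ Γ := der_boxed hth hE
        have : (Formula.dia E).or (Formula.box B) ∈ Γ :=
          hth.2 _ _ (hth.1 _ (LIK.rv E B)) hbx
        rcases hprime _ _ this with h | h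
        · exact h
        · exact absurd h hB)
    exact ⟨Δ, hΔprime, ⟨fun A hA => hsub hA, hdia⟩, hF⟩
  · intro hB
    obtain ⟨Δ, hΔprime, hsub, hdia, _⟩ := extend Γ ⟨hth, hbot, hprime⟩ Formula.bot
      (insert B {A | Formula.box A ∈ Γ}) (by
        intro E hE
        have hded : Der X {A | Formula.box A ∈ Γ} (B.imp (E.or Formula.bot)) :=
          der_ded hE
        have hbx : Formula.box (B.imp (E.or Formula.bot)) ∈ Γ := der_boxed hth hded
        have hdEor : Formula.dia (E.or Formula.bot) ∈ Γ :=
          hth.2 _ _ (hth.2 _ _ (hth.1 _ (LIK.kdia B (E.or Formula.bot))) hbx) hB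
        have : (Formula.dia E).or (Formula.dia Formula.bot) ∈ Γ :=
          hth.2 _ _ (hth.1 _ (LIK.dp E Formula.bot)) hdEor
        rcases hprime _ _ this with h | h
        · exact h
        · exact absurd h (dia_bot_not_mem ⟨hth, hbot, hprime⟩))
    exact ⟨Δ, hΔprime, ⟨fun A hA => hsub (Set.mem_insert_of_mem _ hA), hdia⟩,
      hsub (Set.mem_insert _ _)⟩
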